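/- arXiv:2311.17296 — 4 statements merged into one kernel-verified Lean document; each statement's English description precedes it below -/
import Mathlib

section
/- Let X be a reflexive Banach space with dual X*, let f: X → ℝ be Fréchet differentiable, and let ψ*: X* → ℝ be Fréchet differentiable. Fix N ≥ 1 and real coefficients {a_{k,i}}_{0≤i<k≤N} and {b_{k,i}}_{0≤i≤k≤N} with b_{0,0} = −1. Define the mirror-dual sequences by: q_0 ∈ X, r_0 = −b_{N,N} ∇f(q_0), and for k = 0, …, N−1: q_{k+1} = q_k − Σ_{i=0}^{k} a_{N−i,N−1−k} ∇ψ*(r_i) and r_{k+1} = r_k − Σ_{i=0}^{k+1} b_{N−i,N−1−k} ∇f(q_i). If Σ_{i=0}^{k+1} b_{k+1,i} = 0 for every k = 0, …, N−1, then r_N = ∇f(q_N). -/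
/-!
Unrolling the recursion for `r`, `r n` is minus a combination of the gradients `∇f(q i)`,
`i ≤ n`, whose coefficient is the tail `∑_{m ≥ N - n} b_{N-i,m}` of row `N - i` of `b`.
At `n = N` these tails are full rows, which vanish for `i < N`, while row `0` is
`b_{0,0} = -1`.
-/

open NormedSpace Finset

theorem sum_Ico_sub_succ_eq_add_sum_Ico_sub {A : Type*} [AddCommMonoid A] {N n i : ℕ} (hn : n < N)
    (hi : i ≤ n + 1) (c : ℕ → A) :
    ∑ m ∈ Ico (N - (n + 1)) (N - i + 1), c m =
      c (N - 1 - n) + ∑ m ∈ Ico (N - n) (N - i + 1), c m := by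
  rw [sum_eq_sum_Ico_succ_bot (by omega), show N - (n + 1) + 1 = N - n by omega,
    show N - (n + 1) = N - 1 - n by omega]

section MirrorDual

variable {R M : Type*} [Ring R] [AddCommGroup M] [Module R M]

theorem mirrorDual_eq_neg_sum_tail (N : ℕ) (b : ℕ → ℕ → R) (g r : ℕ → M)
    (hr0 : r 0 = -(b N N) • g 0)
    (hr : ∀ k < N, r (k + 1) = r k - ∑ i ∈ range (k + 2), b (N - i) (N - 1 - k) • g i) :
    ∀ n ≤ N,
      r n = -∑ i ∈ range (n + 1), (∑ m ∈ Ico (N - n) (N - i + 1), b (N - i) m) • g i := by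
  intro n
  induction n with
  | zero => simp [hr0, neg_smul]
  | succ n ih =>
    intro hn
    have hn : n < N := hn
    have extend :
        ∑ i ∈ range (n + 1), (∑ m ∈ Ico (N - n) (N - i + 1), b (N - i) m) • g i =
          ∑ i ∈ range (n + 2), (∑ m ∈ Ico (N - n) (N - i + 1), b (N - i) m) • g i := by
      rw [sum_range_succ _ (n + 1), show N - (n + 1) + 1 = N - n by omega, Ico_self,
        sum_empty, zero_smul, add_zero]
    rw [hr n hn, ih hn.le, extend, ← neg_add', ← sum_add_distrib]
    refine congrArg _ (sum_congr rfl fun i hi => ?_)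
    rw [← add_smul, add_comm,
      sum_Ico_sub_succ_eq_add_sum_Ico_sub hn (Nat.lt_succ_iff.mp (mem_range.mp hi))]

theorem mirrorDual_last_eq (N : ℕ) (b : ℕ → ℕ → R) (hb00 : b 0 0 = -1)
    (hbrow : ∀ k < N, ∑ i ∈ range (k + 2), b (k + 1) i = 0) (g r : ℕ → M)
    (hr0 : r 0 = -(b N N) • g 0)
    (hr : ∀ k < N, r (k + 1) = r k - ∑ i ∈ range (k + 2), b (N - i) (N - 1 - k) • g i) :
    r N = g N := by
  have full_row_eq_zero : ∀ i < N, ∑ m ∈ Ico (N - N) (N - i + 1), b (N - i) m = 0 := by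
    intro i hi
    have h := hbrow (N - i - 1) (by omega)
    rwa [show N - i - 1 + 2 = N - i + 1 by omega, show N - i - 1 + 1 = N - i by omega,
      ← Nat.Ico_zero_eq_range, ← Nat.sub_self N] at h
  rw [mirrorDual_eq_neg_sum_tail N b g r hr0 hr N le_rfl, sum_range_succ,
    sum_eq_zero fun i hi => by rw [full_row_eq_zero i (mem_range.mp hi), zero_smul]]
  simp [hb00]

end MirrorDual

theorem mirror_dual_final_gradient_identity_general
    (X : Type*) [NormedAddCommGroup X] [NormedSpace ℝ X]
    (gradf : X → StrongDual ℝ X)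
    (N : ℕ)
    (b : ℕ → ℕ → ℝ) (hb00 : b 0 0 = -1)
    (hbrow : ∀ k < N, ∑ i ∈ range (k + 2), b (k + 1) i = 0)
    (q : ℕ → X) (r : ℕ → StrongDual ℝ X)
    (hr0 : r 0 = -(b N N) • gradf (q 0))
    (hr : ∀ k < N, r (k + 1) =
      r k - ∑ i ∈ range (k + 2), b (N - i) (N - 1 - k) • gradf (q i)) :
    r N = gradf (q N) :=
  mirrorDual_last_eq N b hb00 hbrow (fun i => gradf (q i)) r hr0 hr

/-- Let `X` be a reflexive Banach space, `f : X → ℝ` Fréchet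
differentiable with gradient `∇f = gradf` (an element of the dual `X*`), and
`ψ* : X* → ℝ` Fréchet differentiable with gradient `∇ψ* = gradPsiStar`
(an element of `X** = X`, identified via the canonical inclusion into the
double dual, which is surjective by reflexivity).  Given coefficients
`a_{k,i}` and `b_{k,i}` with `b 0 0 = -1`, the mirror-dual sequences
`q, r` satisfy `r N = ∇f(q N)` provided each row of `b` sums to zero:
`∑_{i=0}^{k+1} b_{k+1,i} = 0` for `k = 0, …, N-1`. -/
theorem mirror_dual_final_gradient_identity
    (X : Type*) [NormedAddCommGroup X] [NormedSpace ℝ X] [CompleteSpace X]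
    (hrefl : Function.Surjective (inclusionInDoubleDual ℝ X))
    (f : X → ℝ) (gradf : X → StrongDual ℝ X)
    (hf : ∀ x : X, HasFDerivAt f (gradf x) x)
    (psiStar : StrongDual ℝ X → ℝ) (gradPsiStar : StrongDual ℝ X → X)
    (hpsiStar : ∀ u : StrongDual ℝ X,
      HasFDerivAt psiStar (inclusionInDoubleDual ℝ X (gradPsiStar u)) u)
    (N : ℕ) (hN : 1 ≤ N)
    (a b : ℕ → ℕ → ℝ) (hb00 : b 0 0 = -1)
    (hbrow : ∀ k < N, ∑ i ∈ range (k + 2), b (k + 1) i = 0)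
    (q : ℕ → X) (r : ℕ → StrongDual ℝ X)
    (hr0 : r 0 = -(b N N) • gradf (q 0))
    (hq : ∀ k < N, q (k + 1) =
      q k - ∑ i ∈ range (k + 1), a (N - i) (N - 1 - k) • gradPsiStar (r i))
    (hr : ∀ k < N, r (k + 1) =
      r k - ∑ i ∈ range (k + 2), b (N - i) (N - 1 - k) • gradf (q i)) :
    r N = gradf (q N) :=
  mirror_dual_final_gradient_identity_general X gradf N b hb00 hbrow q r hr0 hr
end

section
/- Let (X,‖·‖) be a reflexive Banach space with dual (X*,‖·‖_*), let L > 0, σ > 0, N ≥ 1, let {a_{k,i}}_{0≤i<k≤N} and {b_{k,i}}_{0≤i≤k≤N} be real coefficients with b_{0,0} = −1, let u_0 ≤ u_1 ≤ … ≤ u_N be positive reals, and set v_i = 1/u_{N−i} for i = 0, …, N. Define U: (X*)^{N+1} × X^{N+1} → ℝ by U(A_0,…,A_N, B_0,…,B_N) = Σ_{k=0}^{N−1} (u_k/(2L)) ‖A_k − A_{k+1}‖_*² + Σ_{k=0}^{N−1} (σ/2) ‖B_k − B_{k+1}‖² + Σ_{k=0}^{N−1} ⟨Σ_{i=0}^{k}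 a_{k+1,i} A_i, B_{k+1}⟩ − Σ_{k=0}^{N} u_k ⟨A_k − A_{k+1}, x_k⟩, where A_{N+1} := 0, x_0 := B_0, and x_{k+1} := x_k − Σ_{i=0}^{k+1} b_{k+1,i} B_i. Define V: (X*)^{N+1} × X^{N+1} → ℝ by V(C_0,…,C_N, D_0,…,D_N) = Σ_{k=0}^{N−1} (v_{k+1}/(2L)) ‖C_k − C_{k+1}‖_*² + Σ_{k=0}^{N−1} (σ/2) ‖D_k − D_{k+1}‖² + Σ_{k=0}^{N} ⟨Σ_{i=0}^{k} b_{N−i,N−k} C_i, D_k⟩ + Σ_{k=0}^{N−1} ⟨v_{k+1} C_{k+1} − Σ_{j=0}^{k} (v_{j+1} − v_j) C_j, Σ_{i=0}^{k} a_{N−i,N−1−k} D_i⟩. Then the infimum of U over all (A_0,…,A_N, B_0,…,B_N) ∈ (X*)^{N+1} × X^{N+1} equals the infimum of V over all (C_0,…,C_N, D_0,…,D_N) ∈ (X*)^{N+1} × X^{N+1} (as values in ℝ ∪ {−∞}). -/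
/-!
The change of variables `C_k = -u_N A_N - ∑_{j<k} u_{N-j-1} (A_{N-j-1} - A_{N-j})`,
`D_k = -B_{N-k}` is a bijection of `(X*)^{N+1} × X^{N+1}` (the weights `u_i` are nonzero), and it
carries `V` to `U` term by term, so the two functionals take the same set of values. Both
quadratic sums are merely reversed. The Abel sum `v_{k+1} C_{k+1} - ∑_{j≤k} (v_{j+1} - v_j) C_j`
telescopes to `-A_{N-1-k}` because `v_{j+1} u_{N-1-j} = 1`. The two bilinear sums become double
sums over a triangle of indices reflected in its antidiagonal; for the `b`-sum one first
writes `x_k = -∑_{j≤k} ∑_{i≤j} b_{j,i} B_i` using `b_{0,0} = -1` and swaps the order of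
summation, so that the tails `∑_{k≥j} u_k (A_k - A_{k+1})` appear, and these are exactly
`-C_{N-j}`.
-/

open NormedSpace Finset

section MirrorDuality

variable (X : Type*) [NormedAddCommGroup X] [NormedSpace ℝ X]

/-- Extension of a tuple indexed by `Fin (N+1)` to `ℕ` by zero; in particular
it implements the convention `A_{N+1} := 0`. -/
def extZ {α : Type*} [Zero α] (N : ℕ) (A : Fin (N + 1) → α) : ℕ → α :=
  fun i => if h : i < N + 1 then A ⟨i, h⟩ else 0

/-- The auxiliary sequence `x_0 = B_0`, `x_{k+1} = x_k - ∑_{i=0}^{k+1} b_{k+1,i} B_i`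
appearing in the definition of the primal residual functional `U`. -/
noncomputable def xAux (b : ℕ → ℕ → ℝ) (B : ℕ → X) : ℕ → X :=
  fun k => B 0 - ∑ j ∈ range k, ∑ i ∈ range (j + 2), b (j + 1) i • B i

/-- The primal residual functional
`U(A,B) = ∑_{k<N} (u_k/(2L))‖A_k-A_{k+1}‖_*² + ∑_{k<N} (σ/2)‖B_k-B_{k+1}‖²
 + ∑_{k<N} ⟨∑_{i≤k} a_{k+1,i}A_i, B_{k+1}⟩ - ∑_{k≤N} u_k ⟨A_k-A_{k+1}, x_k⟩`,
with the convention `A_{N+1} = 0` (only values `A_0,…,A_N`, `B_0,…,B_N` are read). -/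
noncomputable def primalU (N : ℕ) (L σ : ℝ) (u : ℕ → ℝ) (a b : ℕ → ℕ → ℝ)
    (A : ℕ → StrongDual ℝ X) (B : ℕ → X) : ℝ :=
  -- `A` with the convention `A_{N+1} := 0`
  let Az : ℕ → StrongDual ℝ X := fun i => if i ≤ N then A i else 0
  (∑ k ∈ range N, u k / (2 * L) * ‖A k - A (k + 1)‖ ^ 2)
    + (∑ k ∈ range N, σ / 2 * ‖B k - B (k + 1)‖ ^ 2)
    + (∑ k ∈ range N, (∑ i ∈ range (k + 1), a (k + 1) i • A i) (B (k + 1)))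
    - ∑ k ∈ range (N + 1), u k * (Az k - Az (k + 1)) (xAux X b B k)

/-- The dual residual functional
`V(C,D) = ∑_{k<N} (v_{k+1}/(2L))‖C_k-C_{k+1}‖_*² + ∑_{k<N} (σ/2)‖D_k-D_{k+1}‖²
 + ∑_{k≤N} ⟨∑_{i≤k} b_{N-i,N-k}C_i, D_k⟩
 + ∑_{k<N} ⟨v_{k+1}C_{k+1} - ∑_{j≤k}(v_{j+1}-v_j)C_j, ∑_{i≤k} a_{N-i,N-1-k}D_i⟩`. -/
noncomputable def dualV (N : ℕ) (L σ : ℝ) (v : ℕ → ℝ) (a b : ℕ → ℕ → ℝ)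
    (C : ℕ → StrongDual ℝ X) (D : ℕ → X) : ℝ :=
  (∑ k ∈ range N, v (k + 1) / (2 * L) * ‖C k - C (k + 1)‖ ^ 2)
    + (∑ k ∈ range N, σ / 2 * ‖D k - D (k + 1)‖ ^ 2)
    + (∑ k ∈ range (N + 1), (∑ i ∈ range (k + 1), b (N - i) (N - k) • C i) (D k))
    + ∑ k ∈ range N,
        (v (k + 1) • C (k + 1) - ∑ j ∈ range (k + 1), (v (j + 1) - v j) • C j)
          (∑ i ∈ range (k + 1), a (N - i) (N - 1 - k) • D i)


variable {X}

theorem extZ_val {α : Type*} [Zero α] {N : ℕ} (f : Fin (N + 1) → α) (k : Fin (N + 1)) :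
    extZ N f k = f k :=
  dif_pos k.is_lt

theorem extZ_coe {α : Type*} [Zero α] {N k : ℕ} (f : ℕ → α) (hk : k ≤ N) :
    extZ N (fun i : Fin (N + 1) => f i) k = f k :=
  dif_pos (Nat.lt_succ_of_le hk)

theorem Finset.sum_range_triangle_reflect {M : Type*} [AddCommMonoid M] (n : ℕ)
    (f : ℕ → ℕ → M) :
    ∑ k ∈ range n, ∑ i ∈ range (k + 1), f k i
      = ∑ k ∈ range n, ∑ i ∈ range (k + 1), f (n - 1 - i) (n - 1 - k) := by
  simp only [sum_sigma']
  refine sum_nbij' (fun p => ⟨n - 1 - p.2, n - 1 - p.1⟩)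
    (fun p => ⟨n - 1 - p.2, n - 1 - p.1⟩) ?_ ?_ ?_ ?_ ?_ <;>
    rintro ⟨k, i⟩ h <;> simp only [mem_sigma, mem_range] at h
  any_goals simp only [mem_sigma, mem_range, Sigma.mk.injEq, heq_iff_eq]; omega
  rw [show n - 1 - (n - 1 - k) = k by omega, show n - 1 - (n - 1 - i) = i by omega]

theorem Finset.smul_sub_sum_range_sub_smul {R M : Type*} [Ring R] [AddCommGroup M]
    [Module R M] (v : ℕ → R) (C : ℕ → M) (n : ℕ) :
    v n • C n - ∑ j ∈ range n, (v (j + 1) - v j) • C j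
      = v 0 • C 0 + ∑ j ∈ range n, v (j + 1) • (C (j + 1) - C j) := by
  induction n with
  | zero => simp
  | succ n ih =>
    rw [sum_range_succ, sum_range_succ, ← add_assoc, ← ih]
    simp only [sub_smul, smul_sub]
    abel

section MirrorD

def mirrorD {E : Type*} [Neg E] (N : ℕ) (B : ℕ → E) : ℕ → E := fun k => -B (N - k)

theorem mirrorD_mirrorD {E : Type*} [InvolutiveNeg E] {N k : ℕ} (B : ℕ → E) (hk : k ≤ N) :
    mirrorD N (mirrorD N B) k = B k := by
  simp [mirrorD, Nat.sub_sub_self hk]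

theorem mirrorD_extZ {E : Type*} [Zero E] [Neg E] {N : ℕ} (B : ℕ → E) :
    mirrorD N (extZ N fun i => B i) = mirrorD N B := by
  funext k
  simp (disch := omega) only [mirrorD, extZ_coe]

theorem sum_mul_norm_mirrorD_sub {E : Type*} [SeminormedAddCommGroup E] (N : ℕ) (c : ℝ)
    (B : ℕ → E) :
    ∑ k ∈ range N, c * ‖mirrorD N B k - mirrorD N B (k + 1)‖ ^ 2
      = ∑ k ∈ range N, c * ‖B k - B (k + 1)‖ ^ 2 := by
  rw [← sum_range_reflect (fun k => c * ‖B k - B (k + 1)‖ ^ 2) N]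
  refine sum_congr rfl fun k hk => ?_
  rw [show N - 1 - k + 1 = N - k by have := mem_range.mp hk; omega, mirrorD, mirrorD,
    neg_sub_neg, show N - (k + 1) = N - 1 - k by omega]

end MirrorD

section MirrorC

variable {E : Type*} [AddCommGroup E] [Module ℝ E]

noncomputable def mirrorC (N : ℕ) (u : ℕ → ℝ) (A : ℕ → E) : ℕ → E :=
  fun k => -(u N • A N) - ∑ j ∈ range k, u (N - (j + 1)) • (A (N - (j + 1)) - A (N - j))

noncomputable def mirrorCInv (N : ℕ) (u : ℕ → ℝ) (C : ℕ → E) : ℕ → E :=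
  fun m => -((u N)⁻¹ • C 0) - ∑ j ∈ range (N - m), (u (N - (j + 1)))⁻¹ • (C (j + 1) - C j)

variable {N : ℕ} {u : ℕ → ℝ}

theorem mirrorC_succ_sub (A : ℕ → E) (k : ℕ) :
    mirrorC N u A (k + 1) - mirrorC N u A k
      = -(u (N - (k + 1)) • (A (N - (k + 1)) - A (N - k))) := by
  simp only [mirrorC, sum_range_succ]
  abel

theorem mirrorC_extZ (A : ℕ → E) : mirrorC N u (extZ N fun i => A i) = mirrorC N u A := by
  funext k
  simp (disch := omega) only [mirrorC, extZ_coe]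

theorem mirrorC_mirrorCInv (hu : ∀ i ≤ N, u i ≠ 0) (C : ℕ → E) {k : ℕ} (hk : k ≤ N) :
    mirrorC N u (mirrorCInv N u C) k = C k := by
  induction k with
  | zero => simp [mirrorC, mirrorCInv, smul_smul, hu N le_rfl]
  | succ k ih =>
    have hdiff : mirrorCInv N u C (N - (k + 1)) - mirrorCInv N u C (N - k)
        = -((u (N - (k + 1)))⁻¹ • (C (k + 1) - C k)) := by
      simp only [mirrorCInv, Nat.sub_sub_self hk, Nat.sub_sub_self (Nat.le_of_succ_le hk),
        sum_range_succ]
      abel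
    rw [eq_add_of_sub_eq (mirrorC_succ_sub _ k), hdiff, ih (by omega), smul_neg, neg_neg,
      smul_smul, mul_inv_cancel₀ (hu _ (Nat.sub_le _ _)), one_smul, sub_add_cancel]

theorem smul_mirrorC_sub_sum {v : ℕ → ℝ} (hu : ∀ i ≤ N, u i ≠ 0)
    (hv : ∀ i ≤ N, v i = 1 / u (N - i)) (A : ℕ → E) {k : ℕ} (hk : k < N) :
    v (k + 1) • mirrorC N u A (k + 1)
        - ∑ j ∈ range (k + 1), (v (j + 1) - v j) • mirrorC N u A j
      = -A (N - 1 - k) := by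
  have hstart : v 0 • mirrorC N u A 0 = -A N := by
    simp [mirrorC, hv 0 N.zero_le, smul_smul, hu N le_rfl]
  have hstep : ∀ j ∈ range (k + 1), v (j + 1) • (mirrorC N u A (j + 1) - mirrorC N u A j)
      = -(A (N - (j + 1)) - A (N - j)) := fun j hj => by
    rw [mirrorC_succ_sub, hv (j + 1) (by have := mem_range.mp hj; omega), smul_neg, smul_smul,
      one_div_mul_cancel (hu _ (Nat.sub_le _ _)), one_smul]
  rw [smul_sub_sum_range_sub_smul, hstart, sum_congr rfl hstep, sum_neg_distrib,
    sum_range_sub (fun j => A (N - j)), Nat.sub_zero, show N - 1 - k = N - (k + 1) by omega]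
  abel

theorem sum_Ico_smul_sub_eq_neg_mirrorC (A : ℕ → E) {t : ℕ} (ht : t ≤ N) :
    ∑ k ∈ Ico (N - t) (N + 1),
        u k • ((if k ≤ N then A k else 0) - (if k + 1 ≤ N then A (k + 1) else 0))
      = -mirrorC N u A t := by
  have hreflect := sum_Ico_reflect
    (fun k => u k • ((if k ≤ N then A k else 0) - (if k + 1 ≤ N then A (k + 1) else 0))) 0
    (show t + 1 ≤ N + 1 by omega)
  rw [show N + 1 - (t + 1) = N - t by omega, Nat.sub_zero, ← range_eq_Ico] at hreflect
  rw [← hreflect, sum_range_succ', mirrorC, neg_sub, sub_neg_eq_add]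
  congr 1
  · refine sum_congr rfl fun j hj => ?_
    have hj := mem_range.mp hj
    rw [if_pos (by omega), if_pos (by omega), show N - (j + 1) + 1 = N - j by omega]
  · simp

end MirrorC

theorem sum_mul_norm_mirrorC_sub {F : Type*} [NormedAddCommGroup F] [NormedSpace ℝ F]
    {N : ℕ} {u v : ℕ → ℝ} (hu : ∀ i ≤ N, u i ≠ 0) (hv : ∀ i ≤ N, v i = 1 / u (N - i))
    (L : ℝ) (A : ℕ → F) :
    ∑ k ∈ range N, v (k + 1) / (2 * L) * ‖mirrorC N u A k - mirrorC N u A (k + 1)‖ ^ 2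
      = ∑ k ∈ range N, u k / (2 * L) * ‖A k - A (k + 1)‖ ^ 2 := by
  rw [← sum_range_reflect (fun k => u k / (2 * L) * ‖A k - A (k + 1)‖ ^ 2) N]
  refine sum_congr rfl fun k hk => ?_
  have hk := mem_range.mp hk
  rw [← neg_sub, mirrorC_succ_sub, neg_neg, norm_smul, mul_pow, Real.norm_eq_abs, sq_abs,
    hv (k + 1) hk, show N - 1 - k = N - (k + 1) by omega,
    show N - (k + 1) + 1 = N - k by omega]
  have := hu (N - (k + 1)) (Nat.sub_le _ _)
  field_simp

theorem xAux_eq_neg_sum {b : ℕ → ℕ → ℝ} (hb00 : b 0 0 = -1) (B : ℕ → X) (k : ℕ) :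
    xAux X b B k = -∑ j ∈ range (k + 1), ∑ i ∈ range (j + 1), b j i • B i := by
  rw [xAux, sum_range_succ', sum_range_one, hb00, neg_one_smul]
  abel

theorem sum_pairing_a_mirror {N : ℕ} {u v : ℕ → ℝ} (hu : ∀ i ≤ N, u i ≠ 0)
    (hv : ∀ i ≤ N, v i = 1 / u (N - i)) (a : ℕ → ℕ → ℝ) (A : ℕ → StrongDual ℝ X)
    (B : ℕ → X) :
    ∑ k ∈ range N,
        (v (k + 1) • mirrorC N u A (k + 1)
            - ∑ j ∈ range (k + 1), (v (j + 1) - v j) • mirrorC N u A j)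
          (∑ i ∈ range (k + 1), a (N - i) (N - 1 - k) • mirrorD N B i)
      = ∑ k ∈ range N, (∑ i ∈ range (k + 1), a (k + 1) i • A i) (B (k + 1)) := by
  calc _ = ∑ k ∈ range N, ∑ i ∈ range (k + 1),
          a (N - i) (N - 1 - k) * A (N - 1 - k) (B (N - i)) :=
        sum_congr rfl fun k hk => by
          simp [smul_mirrorC_sub_sum hu hv A (mem_range.mp hk), mirrorD, map_sum]
    _ = ∑ k ∈ range N, ∑ i ∈ range (k + 1), a (k + 1) i * A i (B (k + 1)) := by
        rw [sum_range_triangle_reflect]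
        refine sum_congr rfl fun k hk => sum_congr rfl fun i hi => ?_
        have := mem_range.mp hk
        have := mem_range.mp hi
        rw [show N - (N - 1 - k) = k + 1 by omega, show N - 1 - (N - 1 - i) = i by omega]
    _ = _ := by simp

theorem sum_pairing_b_mirror {N : ℕ} {u : ℕ → ℝ} {b : ℕ → ℕ → ℝ} (hb00 : b 0 0 = -1)
    (A : ℕ → StrongDual ℝ X) (B : ℕ → X) :
    ∑ k ∈ range (N + 1),
        (∑ i ∈ range (k + 1), b (N - i) (N - k) • mirrorC N u A i) (mirrorD N B k)
      = -∑ k ∈ range (N + 1), u k *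
          ((if k ≤ N then A k else 0) - (if k + 1 ≤ N then A (k + 1) else 0)) (xAux X b B k) := by
  set G : ℕ → StrongDual ℝ X :=
    fun k => (if k ≤ N then A k else 0) - (if k + 1 ≤ N then A (k + 1) else 0)
  calc _ = ∑ k ∈ range (N + 1), ∑ i ∈ range (k + 1),
          -(b (N - i) (N - k) * mirrorC N u A i (B (N - k))) := by
        simp [mirrorD]
    _ = ∑ j ∈ range (N + 1), -∑ i ∈ range (j + 1), b j i * mirrorC N u A (N - j) (B i) := by
        rw [sum_range_triangle_reflect, Nat.add_sub_cancel]
        refine sum_congr rfl fun k hk => ?_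
        rw [← sum_neg_distrib]
        refine sum_congr rfl fun i hi => ?_
        have := mem_range.mp hk
        have := mem_range.mp hi
        rw [show N - (N - k) = k by omega, show N - (N - i) = i by omega]
    _ = ∑ j ∈ range (N + 1),
          (∑ k ∈ Ico j (N + 1), u k • G k) (∑ i ∈ range (j + 1), b j i • B i) := by
        refine sum_congr rfl fun j hj => ?_
        have htail : ∑ k ∈ Ico j (N + 1), u k • G k = -mirrorC N u A (N - j) := by
          have h := sum_Ico_smul_sub_eq_neg_mirrorC (u := u) A (Nat.sub_le N j)
          rwa [Nat.sub_sub_self (by have := mem_range.mp hj; omega)] at h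
        simp [htail]
    _ = ∑ k ∈ range (N + 1), ∑ j ∈ range (k + 1),
          u k * G k (∑ i ∈ range (j + 1), b j i • B i) := by
        simp only [_root_.sum_apply, smul_apply, smul_eq_mul]
        refine (sum_comm' fun k j => ?_).symm
        simp only [mem_range, mem_Ico]
        omega
    _ = _ := by
        simp only [G, xAux_eq_neg_sum hb00, map_neg, map_sum, mul_neg, mul_sum, sum_neg_distrib,
          neg_neg]

theorem dualV_mirror {N : ℕ} (L σ : ℝ) {u v : ℕ → ℝ} {a b : ℕ → ℕ → ℝ} (hb00 : b 0 0 = -1)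
    (hu : ∀ i ≤ N, u i ≠ 0) (hv : ∀ i ≤ N, v i = 1 / u (N - i))
    (A : ℕ → StrongDual ℝ X) (B : ℕ → X) :
    dualV X N L σ v a b (mirrorC N u A) (mirrorD N B) = primalU X N L σ u a b A B := by
  simp only [dualV, primalU]
  rw [sum_mul_norm_mirrorC_sub hu hv, sum_mul_norm_mirrorD_sub, sum_pairing_b_mirror hb00,
    sum_pairing_a_mirror hu hv]
  ring

theorem dualV_extZ {N : ℕ} {L σ : ℝ} {v : ℕ → ℝ} {a b : ℕ → ℕ → ℝ}
    (C : ℕ → StrongDual ℝ X) (D : ℕ → X) :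
    dualV X N L σ v a b (extZ N fun i => C i) (extZ N fun i => D i)
      = dualV X N L σ v a b C D := by
  unfold dualV
  simp +contextual (disch := (simp only [mem_range] at *; omega)) only [extZ_coe]

noncomputable def mirrorFin {E F : Type*} [AddCommGroup E] [Module ℝ E] [AddCommGroup F]
    (N : ℕ) (u : ℕ → ℝ) (p : (Fin (N + 1) → E) × (Fin (N + 1) → F)) :
    (Fin (N + 1) → E) × (Fin (N + 1) → F) :=
  (fun k => mirrorC N u (extZ N p.1) k, fun k => mirrorD N (extZ N p.2) k)

theorem mirrorFin_surjective {E F : Type*} [AddCommGroup E] [Module ℝ E] [AddCommGroup F]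
    {N : ℕ} {u : ℕ → ℝ} (hu : ∀ i ≤ N, u i ≠ 0) :
    Function.Surjective (mirrorFin (E := E) (F := F) N u) := by
  rintro ⟨C, D⟩
  refine ⟨(fun m => mirrorCInv N u (extZ N C) m, fun m => mirrorD N (extZ N D) m), ?_⟩
  ext k : 2
  · simp [mirrorFin, mirrorC_extZ, mirrorC_mirrorCInv hu _ k.is_le, extZ_val]
  · simp [mirrorFin, mirrorD_extZ, mirrorD_mirrorD _ k.is_le, extZ_val]

theorem mirror_duality_general (L σ : ℝ) (N : ℕ) (a b : ℕ → ℕ → ℝ) (hb00 : b 0 0 = -1)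
    (u v : ℕ → ℝ)
    (hu_pos : ∀ i ≤ N, 0 < u i)
    (hv : ∀ i ≤ N, v i = 1 / u (N - i)) :
    (⨅ (A : Fin (N + 1) → StrongDual ℝ X) (B : Fin (N + 1) → X),
        (primalU X N L σ u a b (extZ N A) (extZ N B) : EReal))
      = ⨅ (C : Fin (N + 1) → StrongDual ℝ X) (D : Fin (N + 1) → X),
          (dualV X N L σ v a b (extZ N C) (extZ N D) : EReal) := by
  have hu : ∀ i ≤ N, u i ≠ 0 := fun i hi => (hu_pos i hi).ne'
  have hV (p : (Fin (N + 1) → StrongDual ℝ X) × (Fin (N + 1) → X)) :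
      dualV X N L σ v a b (extZ N (mirrorFin N u p).1) (extZ N (mirrorFin N u p).2)
        = primalU X N L σ u a b (extZ N p.1) (extZ N p.2) := by
    simp only [mirrorFin, dualV_extZ, dualV_mirror L σ hb00 hu hv]
  rw [← iInf_prod (f := fun p => (primalU X N L σ u a b (extZ N p.1) (extZ N p.2) : EReal)),
    ← iInf_prod (f := fun p => (dualV X N L σ v a b (extZ N p.1) (extZ N p.2) : EReal)),
    ← (mirrorFin_surjective hu).iInf_comp
      (fun p => (dualV X N L σ v a b (extZ N p.1) (extZ N p.2) : EReal))]
  simp only [hV]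

/-- **Mirror Duality.** For a reflexive Banach space `X`, `L > 0`,
`σ > 0`, `N ≥ 1`, coefficients `a, b` with `b 0 0 = -1`, positive nondecreasing
`u_0 ≤ … ≤ u_N`, and `v_i = 1/u_{N-i}`, the infimum of the primal residual
functional `U` over all `(A, B) ∈ (X*)^{N+1} × X^{N+1}` equals the infimum of
the dual residual functional `V` over all `(C, D) ∈ (X*)^{N+1} × X^{N+1}`
(as values in `ℝ ∪ {-∞}`, i.e. in `EReal`). -/
theorem mirror_duality
    [CompleteSpace X] (hrefl : Function.Surjective (inclusionInDoubleDual ℝ X))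
    (L σ : ℝ) (hL : 0 < L) (hσ : 0 < σ)
    (N : ℕ) (hN : 1 ≤ N)
    (a b : ℕ → ℕ → ℝ) (hb00 : b 0 0 = -1)
    (u v : ℕ → ℝ)
    (hu_pos : ∀ i ≤ N, 0 < u i)
    (hu_mono : ∀ i, i < N → u i ≤ u (i + 1))
    (hv : ∀ i ≤ N, v i = 1 / u (N - i)) :
    (⨅ (A : Fin (N + 1) → StrongDual ℝ X) (B : Fin (N + 1) → X),
        (primalU X N L σ u a b (extZ N A) (extZ N B) : EReal))
      = ⨅ (C : Fin (N + 1) → StrongDual ℝ X) (D : Fin (N + 1) → X),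
          (dualV X N L σ v a b (extZ N C) (extZ N D) : EReal) :=
  mirror_duality_general L σ N a b hb00 u v hu_pos hv

end MirrorDuality
end

section
/- Let X be a reflexive Banach space, f: X → ℝ Fréchet differentiable, ψ*: X* → ℝ Fréchet differentiable, L > 0, σ > 0, N ≥ 1, and let θ_{−2} = θ_{−1} = 0 and θ_0, θ_1, …, θ_N be positive reals. Define the AMD coefficients by a_{k+1,i} = 0 for 0 ≤ i < k and a_{k+1,k} = (σ/L)(θ_k² − θ_{k−1}²), for k = 0, …, N−1; and b_{0,0} = −1, b_{k+1,0} = 0 for k ≥ 1, b_{k+1,s} = (θ_{s−1}² − θ_{s−2}²)(1/θ_k² − 1/θ_{k+1}²) for 1 ≤ s ≤ k−1, b_{k+1,k} = (θ_k² − θ_{k−2}²)/θ_k² − (θ_{k−1}² − θ_{k−2}²)/θ_{k+1}², and b_{k+1,k+1} = −(θ_{k+1}² − θ_{k−1}²)/θ_{k+1}², for k = 0, …, N−1. Then the mirror dual of this CFOM coincides with dual-AMD: for any q_0 ∈ X, the mirror-dual sequences q_{k+1} = q_k − Σ_{i=0}^{k} a_{N−i,N−1−k} ∇ψ*(r_i),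 r_{k+1} = r_k − Σ_{i=0}^{k+1} b_{N−i,N−1−k} ∇f(q_i) with r_0 = −b_{N,N} ∇f(q_0) are identical to the sequences generated by: g_0 = (1/θ_N²) ∇f(q_0), r_0 = ((θ_N² − θ_{N−2}²)/θ_N²) ∇f(q_0), and for k = 0, …, N−1: q_{k+1} = q_k − (σ/L)(θ_{N−k−1}² − θ_{N−k−2}²) ∇ψ*(r_k); g_{k+1} = g_k + (1/θ_{N−k−1}²)(∇f(q_{k+1}) − ∇f(q_k)); r_{k+1} = r_k + (θ_{N−k−1}² − θ_{N−k−2}²)(g_{k+1} − g_k) + (θ_{N−k−2}² − θ_{N−k−3}²) g_{k+1} (with θ_j := 0 for j < 0). -/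
open NormedSpace Finset

/-!
Unrolling the `g`-recursion of dual-AMD gives `g_k = w_k ∇f(q_k) + ∑_{i<k} (w_i - w_{i+1}) ∇f(q_i)`
with `w_k = 1 / θ_{N-k}²`. In the mirror dual of AMD, column `N-1-k` of `a` has a single nonzero
entry, and every entry of column `N-1-k` of `b` except the last two is the multiple
`-(θ_{N-k-2}² - θ_{N-k-3}²) (w_i - w_{i+1})` of an increment of these weights. Hence the
mirror-dual update of `r` is the dual-AMD update with `g_k` written in closed form, and the two
methods agree by induction on `k`.
-/

section

variable {V : Type*} [AddCommGroup V] [Module ℝ V] {N : ℕ} {θ : ℤ → ℝ}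

theorem eq_smul_add_sum_of_eq_add_smul_sub {n : ℕ} {c : ℕ → ℝ} {F g : ℕ → V}
    (h0 : g 0 = c 0 • F 0)
    (hsucc : ∀ k < n, g (k + 1) = g k + c (k + 1) • (F (k + 1) - F k)) :
    ∀ k ≤ n, g k = c k • F k + ∑ i ∈ range k, (c i - c (i + 1)) • F i := by
  intro k hk
  induction k with
  | zero => simpa using h0
  | succ k ih =>
    rw [hsucc k hk, ih (by omega), sum_range_succ]
    module

theorem amd_b_diag (hθneg : ∀ j : ℤ, j < 0 → θ j = 0) (hθ0 : θ 0 ≠ 0)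
    {b : ℕ → ℕ → ℝ} (hb00 : b 0 0 = -1)
    (hbk1 : ∀ k < N, b (k + 1) (k + 1) =
      -(θ (k + 1 : ℕ) ^ 2 - θ ((k : ℤ) - 1) ^ 2) / θ (k + 1 : ℕ) ^ 2)
    {m : ℕ} (hm : m ≤ N) :
    b m m = -(θ m ^ 2 - θ ((m : ℤ) - 2) ^ 2) / θ m ^ 2 := by
  rcases m with _ | k
  · norm_num [hb00, hθneg (-2) (by norm_num), hθ0]
  · rw [hbk1 k (by omega)]
    push_cast
    ring_nf

theorem amd_b_of_succ_lt (hθneg : ∀ j : ℤ, j < 0 → θ j = 0) {b : ℕ → ℕ → ℝ}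
    (hb0 : ∀ k, 1 ≤ k → k < N → b (k + 1) 0 = 0)
    (hbs : ∀ k < N, ∀ s, 1 ≤ s → s + 1 ≤ k →
      b (k + 1) s = (θ ((s : ℤ) - 1) ^ 2 - θ ((s : ℤ) - 2) ^ 2) *
        (1 / θ k ^ 2 - 1 / θ (k + 1 : ℕ) ^ 2))
    {m s : ℕ} (hsm : s + 1 < m) (hm : m ≤ N) :
    b m s = (θ ((s : ℤ) - 1) ^ 2 - θ ((s : ℤ) - 2) ^ 2) *
      (1 / θ ((m : ℤ) - 1) ^ 2 - 1 / θ m ^ 2) := by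
  obtain ⟨k, rfl⟩ : ∃ k, m = k + 1 := ⟨m - 1, by omega⟩
  rcases s with _ | s
  · norm_num [hb0 k (by omega) (by omega), hθneg (-1) (by norm_num), hθneg (-2) (by norm_num)]
  · rw [hbs k (by omega) (s + 1) (by omega) (by omega)]
    push_cast
    ring_nf

noncomputable def dualAMDWeight (θ : ℤ → ℝ) (N k : ℕ) : ℝ := 1 / θ ((N : ℤ) - k) ^ 2

theorem dualAMDWeight_succ (k : ℕ) :
    dualAMDWeight θ N (k + 1) = 1 / θ ((N : ℤ) - k - 1) ^ 2 := by
  simp [dualAMDWeight, sub_sub]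

theorem mirror_sum_a_eq {σ L : ℝ} {a : ℕ → ℕ → ℝ}
    (ha0 : ∀ k < N, ∀ i < k, a (k + 1) i = 0)
    (hak : ∀ k < N, a (k + 1) k = σ / L * (θ k ^ 2 - θ ((k : ℤ) - 1) ^ 2))
    (Φ : ℕ → V) {k : ℕ} (hk : k < N) :
    ∑ i ∈ range (k + 1), a (N - i) (N - 1 - k) • Φ i =
      (σ / L * (θ ((N : ℤ) - k - 1) ^ 2 - θ ((N : ℤ) - k - 2) ^ 2)) • Φ k := by
  rw [sum_eq_single_of_mem k (self_mem_range_succ k) fun i hi hik => ?_]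
  · rw [show N - k = N - 1 - k + 1 by omega, hak _ (by omega),
      show ((N - 1 - k : ℕ) : ℤ) = (N : ℤ) - k - 1 by omega,
      show (N : ℤ) - k - 1 - 1 = (N : ℤ) - k - 2 by ring]
  · have hik : i < k := by have := mem_range.1 hi; omega
    rw [show N - i = N - i - 1 + 1 by omega, ha0 _ (by omega) _ (by omega), zero_smul]

theorem mirror_sum_b_eq (hθneg : ∀ j : ℤ, j < 0 → θ j = 0) (hθ0 : θ 0 ≠ 0)
    {b : ℕ → ℕ → ℝ} (hb00 : b 0 0 = -1)
    (hb0 : ∀ k, 1 ≤ k → k < N → b (k + 1) 0 = 0)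
    (hbs : ∀ k < N, ∀ s, 1 ≤ s → s + 1 ≤ k →
      b (k + 1) s = (θ ((s : ℤ) - 1) ^ 2 - θ ((s : ℤ) - 2) ^ 2) *
        (1 / θ k ^ 2 - 1 / θ (k + 1 : ℕ) ^ 2))
    (hbk : ∀ k < N, b (k + 1) k =
      (θ k ^ 2 - θ ((k : ℤ) - 2) ^ 2) / θ k ^ 2 -
        (θ ((k : ℤ) - 1) ^ 2 - θ ((k : ℤ) - 2) ^ 2) / θ (k + 1 : ℕ) ^ 2)
    (hbk1 : ∀ k < N, b (k + 1) (k + 1) =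
      -(θ (k + 1 : ℕ) ^ 2 - θ ((k : ℤ) - 1) ^ 2) / θ (k + 1 : ℕ) ^ 2)
    (F : ℕ → V) {k : ℕ} (hk : k < N) :
    ∑ i ∈ range (k + 2), b (N - i) (N - 1 - k) • F i =
      -(((θ ((N : ℤ) - k - 1) ^ 2 - θ ((N : ℤ) - k - 3) ^ 2) / θ ((N : ℤ) - k - 1) ^ 2) •
          (F (k + 1) - F k) +
        (θ ((N : ℤ) - k - 2) ^ 2 - θ ((N : ℤ) - k - 3) ^ 2) •
          (dualAMDWeight θ N k • F k + ∑ i ∈ range k,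
            (dualAMDWeight θ N i - dualAMDWeight θ N (i + 1)) • F i)) := by
  have hcol : ∀ i ∈ range k, b (N - i) (N - 1 - k) • F i =
      -(θ ((N : ℤ) - k - 2) ^ 2 - θ ((N : ℤ) - k - 3) ^ 2) •
        ((dualAMDWeight θ N i - dualAMDWeight θ N (i + 1)) • F i) := by
    intro i hi
    have hik : i < k := mem_range.1 hi
    rw [amd_b_of_succ_lt hθneg hb0 hbs (by omega) (by omega), smul_smul, dualAMDWeight,
      dualAMDWeight_succ, show ((N - 1 - k : ℕ) : ℤ) = (N : ℤ) - k - 1 by omega,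
      show ((N - i : ℕ) : ℤ) = (N : ℤ) - i by omega]
    congr 1
    ring_nf
  have hsub : b (N - k) (N - 1 - k) =
      (θ ((N : ℤ) - k - 1) ^ 2 - θ ((N : ℤ) - k - 3) ^ 2) / θ ((N : ℤ) - k - 1) ^ 2 -
        (θ ((N : ℤ) - k - 2) ^ 2 - θ ((N : ℤ) - k - 3) ^ 2) / θ ((N : ℤ) - k) ^ 2 := by
    rw [show N - k = N - 1 - k + 1 by omega, hbk _ (by omega),
      show ((N - 1 - k + 1 : ℕ) : ℤ) = (N : ℤ) - k by omega,
      show ((N - 1 - k : ℕ) : ℤ) = (N : ℤ) - k - 1 by omega]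
    ring_nf
  have hdiag : b (N - (k + 1)) (N - 1 - k) =
      -(θ ((N : ℤ) - k - 1) ^ 2 - θ ((N : ℤ) - k - 3) ^ 2) / θ ((N : ℤ) - k - 1) ^ 2 := by
    rw [show N - (k + 1) = N - 1 - k by omega, amd_b_diag hθneg hθ0 hb00 hbk1 (by omega),
      show ((N - 1 - k : ℕ) : ℤ) = (N : ℤ) - k - 1 by omega]
    ring_nf
  rw [sum_range_succ, sum_range_succ, sum_congr rfl hcol, ← smul_sum, hsub, hdiag,
    dualAMDWeight]
  module

end

theorem dual_AMD_is_mirror_dual_of_AMD_general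
    (X : Type*) [NormedAddCommGroup X] [NormedSpace ℝ X]
    (gradf : X → StrongDual ℝ X)
    (gradPsiStar : StrongDual ℝ X → X)
    (L σ : ℝ)
    (N : ℕ)
    (θ : ℤ → ℝ)
    (hθneg : ∀ j : ℤ, j < 0 → θ j = 0)
    (hθpos : ∀ j : ℤ, 0 ≤ j → j ≤ N → 0 < θ j)
    -- the AMD coefficients
    (a b : ℕ → ℕ → ℝ)
    (ha0 : ∀ k < N, ∀ i < k, a (k + 1) i = 0)
    (hak : ∀ k < N, a (k + 1) k = σ / L * (θ k ^ 2 - θ ((k : ℤ) - 1) ^ 2))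
    (hb00 : b 0 0 = -1)
    (hb0 : ∀ k, 1 ≤ k → k < N → b (k + 1) 0 = 0)
    (hbs : ∀ k < N, ∀ s, 1 ≤ s → s + 1 ≤ k →
      b (k + 1) s = (θ ((s : ℤ) - 1) ^ 2 - θ ((s : ℤ) - 2) ^ 2) *
        (1 / θ k ^ 2 - 1 / θ (k + 1 : ℕ) ^ 2))
    (hbk : ∀ k < N, b (k + 1) k =
      (θ k ^ 2 - θ ((k : ℤ) - 2) ^ 2) / θ k ^ 2 -
        (θ ((k : ℤ) - 1) ^ 2 - θ ((k : ℤ) - 2) ^ 2) / θ (k + 1 : ℕ) ^ 2)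
    (hbk1 : ∀ k < N, b (k + 1) (k + 1) =
      -(θ (k + 1 : ℕ) ^ 2 - θ ((k : ℤ) - 1) ^ 2) / θ (k + 1 : ℕ) ^ 2)
    -- the mirror-dual sequences of the CFOM with coefficients `a`, `b`
    (q : ℕ → X) (r : ℕ → StrongDual ℝ X)
    (hr0 : r 0 = -(b N N) • gradf (q 0))
    (hq : ∀ k < N, q (k + 1) =
      q k - ∑ i ∈ range (k + 1), a (N - i) (N - 1 - k) • gradPsiStar (r i))
    (hr : ∀ k < N, r (k + 1) =
      r k - ∑ i ∈ range (k + 2), b (N - i) (N - 1 - k) • gradf (q i))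
    -- the dual-AMD sequences
    (q' : ℕ → X) (g r' : ℕ → StrongDual ℝ X)
    (hq'0 : q' 0 = q 0)
    (hg0 : g 0 = (1 / θ (N : ℤ) ^ 2) • gradf (q' 0))
    (hr'0 : r' 0 =
      ((θ (N : ℤ) ^ 2 - θ ((N : ℤ) - 2) ^ 2) / θ (N : ℤ) ^ 2) • gradf (q' 0))
    (hq' : ∀ k < N, q' (k + 1) = q' k -
      (σ / L * (θ ((N : ℤ) - k - 1) ^ 2 - θ ((N : ℤ) - k - 2) ^ 2)) •
        gradPsiStar (r' k))
    (hg : ∀ k < N, g (k + 1) = g k +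
      (1 / θ ((N : ℤ) - k - 1) ^ 2) • (gradf (q' (k + 1)) - gradf (q' k)))
    (hr' : ∀ k < N, r' (k + 1) = r' k +
      (θ ((N : ℤ) - k - 1) ^ 2 - θ ((N : ℤ) - k - 2) ^ 2) • (g (k + 1) - g k) +
        (θ ((N : ℤ) - k - 2) ^ 2 - θ ((N : ℤ) - k - 3) ^ 2) • g (k + 1)) :
    ∀ k ≤ N, q k = q' k ∧ r k = r' k := by
  have hθ0 : θ 0 ≠ 0 := (hθpos 0 le_rfl (Int.natCast_nonneg N)).ne'
  have hg_closed := eq_smul_add_sum_of_eq_add_smul_sub (c := dualAMDWeight θ N)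
    (F := fun i => gradf (q' i)) (by simpa [dualAMDWeight] using hg0)
    (fun k hk => by rw [dualAMDWeight_succ]; exact hg k hk)
  suffices h : ∀ k ≤ N, (∀ j ≤ k, q j = q' j) ∧ r k = r' k from
    fun k hk => ⟨(h k hk).1 k le_rfl, (h k hk).2⟩
  intro k hk
  induction k with
  | zero =>
    refine ⟨fun j hj => by rw [Nat.le_zero.1 hj, hq'0], ?_⟩
    rw [hr0, hr'0, amd_b_diag hθneg hθ0 hb00 hbk1 le_rfl, hq'0, neg_div, neg_neg]
  | succ k ih =>
    obtain ⟨hq_le, hr_eq⟩ := ih (by omega)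
    have hq_succ : q (k + 1) = q' (k + 1) := by
      rw [hq k hk, hq' k hk, mirror_sum_a_eq ha0 hak _ hk, hq_le k le_rfl, hr_eq]
    have hq_le_succ : ∀ j ≤ k + 1, q j = q' j := fun j hj =>
      (Nat.le_succ_iff.1 hj).elim (hq_le j) fun hj => hj ▸ hq_succ
    refine ⟨hq_le_succ, ?_⟩
    rw [hr k hk, hr' k hk, hg k hk, hr_eq,
      sum_congr rfl fun i hi => by rw [hq_le_succ i (by have := mem_range.1 hi; omega)],
      mirror_sum_b_eq hθneg hθ0 hb00 hb0 hbs hbk hbk1 (fun i => gradf (q' i)) hk,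
      ← hg_closed k (by omega)]
    module

/-- The mirror dual of the AMD coupled first-order method
coincides with dual-AMD.  Here `X` is a reflexive Banach space, `f : X → ℝ`
and `ψ* : X* → ℝ` are Fréchet differentiable, `θ : ℤ → ℝ` satisfies
`θ j = 0` for `j < 0` and `θ j > 0` for `0 ≤ j ≤ N`, and the AMD coefficients
`a, b` are given explicitly in terms of `θ`.  The mirror-dual sequences
`(q, r)` of the CFOM with these coefficients coincide with the sequences
`(q', r')` generated by the dual-AMD recursion (with auxiliary sequence `g`). -/
theorem dual_AMD_is_mirror_dual_of_AMD
    (X : Type*) [NormedAddCommGroup X] [NormedSpace ℝ X] [CompleteSpace X]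
    (hrefl : Function.Surjective (inclusionInDoubleDual ℝ X))
    (f : X → ℝ) (gradf : X → StrongDual ℝ X)
    (hf : ∀ x : X, HasFDerivAt f (gradf x) x)
    (psiStar : StrongDual ℝ X → ℝ) (gradPsiStar : StrongDual ℝ X → X)
    (hpsiStar : ∀ u : StrongDual ℝ X,
      HasFDerivAt psiStar (inclusionInDoubleDual ℝ X (gradPsiStar u)) u)
    (L σ : ℝ) (hL : 0 < L) (hσ : 0 < σ)
    (N : ℕ) (hN : 1 ≤ N)
    (θ : ℤ → ℝ)
    (hθneg : ∀ j : ℤ, j < 0 → θ j = 0)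
    (hθpos : ∀ j : ℤ, 0 ≤ j → j ≤ N → 0 < θ j)
    -- the AMD coefficients
    (a b : ℕ → ℕ → ℝ)
    (ha0 : ∀ k < N, ∀ i < k, a (k + 1) i = 0)
    (hak : ∀ k < N, a (k + 1) k = σ / L * (θ k ^ 2 - θ ((k : ℤ) - 1) ^ 2))
    (hb00 : b 0 0 = -1)
    (hb0 : ∀ k, 1 ≤ k → k < N → b (k + 1) 0 = 0)
    (hbs : ∀ k < N, ∀ s, 1 ≤ s → s + 1 ≤ k →
      b (k + 1) s = (θ ((s : ℤ) - 1) ^ 2 - θ ((s : ℤ) - 2) ^ 2) *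
        (1 / θ k ^ 2 - 1 / θ (k + 1 : ℕ) ^ 2))
    (hbk : ∀ k < N, b (k + 1) k =
      (θ k ^ 2 - θ ((k : ℤ) - 2) ^ 2) / θ k ^ 2 -
        (θ ((k : ℤ) - 1) ^ 2 - θ ((k : ℤ) - 2) ^ 2) / θ (k + 1 : ℕ) ^ 2)
    (hbk1 : ∀ k < N, b (k + 1) (k + 1) =
      -(θ (k + 1 : ℕ) ^ 2 - θ ((k : ℤ) - 1) ^ 2) / θ (k + 1 : ℕ) ^ 2)
    -- the mirror-dual sequences of the CFOM with coefficients `a`, `b`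
    (q : ℕ → X) (r : ℕ → StrongDual ℝ X)
    (hr0 : r 0 = -(b N N) • gradf (q 0))
    (hq : ∀ k < N, q (k + 1) =
      q k - ∑ i ∈ range (k + 1), a (N - i) (N - 1 - k) • gradPsiStar (r i))
    (hr : ∀ k < N, r (k + 1) =
      r k - ∑ i ∈ range (k + 2), b (N - i) (N - 1 - k) • gradf (q i))
    -- the dual-AMD sequences
    (q' : ℕ → X) (g r' : ℕ → StrongDual ℝ X)
    (hq'0 : q' 0 = q 0)
    (hg0 : g 0 = (1 / θ (N : ℤ) ^ 2) • gradf (q' 0))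
    (hr'0 : r' 0 =
      ((θ (N : ℤ) ^ 2 - θ ((N : ℤ) - 2) ^ 2) / θ (N : ℤ) ^ 2) • gradf (q' 0))
    (hq' : ∀ k < N, q' (k + 1) = q' k -
      (σ / L * (θ ((N : ℤ) - k - 1) ^ 2 - θ ((N : ℤ) - k - 2) ^ 2)) •
        gradPsiStar (r' k))
    (hg : ∀ k < N, g (k + 1) = g k +
      (1 / θ ((N : ℤ) - k - 1) ^ 2) • (gradf (q' (k + 1)) - gradf (q' k)))
    (hr' : ∀ k < N, r' (k + 1) = r' k +
      (θ ((N : ℤ) - k - 1) ^ 2 - θ ((N : ℤ) - k - 2) ^ 2) • (g (k + 1) - g k) +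
        (θ ((N : ℤ) - k - 2) ^ 2 - θ ((N : ℤ) - k - 3) ^ 2) • g (k + 1)) :
    ∀ k ≤ N, q k = q' k ∧ r k = r' k :=
  dual_AMD_is_mirror_dual_of_AMD_general X gradf gradPsiStar L σ N θ hθneg hθpos a b ha0 hak hb00
    hb0 hbs hbk hbk1 q r hr0 hq hr q' g r' hq'0 hg0 hr'0 hq' hg hr'
end

section
/- Let X be a real Hilbert space, f: X → ℝ convex and Fréchet differentiable, and take φ = ψ = ½‖·‖² (so that ∇φ*(y) = y and ∇ψ*(r) = r). Let N ≥ 1 and let {a_{k,i}}_{0≤i<k≤N}, {b_{k,i}}_{0≤i≤k≤N} be real coefficients with b_{0,0} = −1 and Σ_{i=0}^{k+1} b_{k+1,i} = 0 for k = 0, …, N−1. Define h_{k+1,l} := −Σ_{i=0}^{k+1} b_{k+1,i} (Σ_{j=l}^{i−1} a_{j+1,l}) for 0 ≤ l ≤ k ≤ N−1. Then: (1) the CFOM iterates y_{k+1} = y_k − Σ_{i=0}^{k} a_{k+1,i} ∇f(x_i), x_{k+1} = x_k − Σ_{i=0}^{k+1} b_{k+1,i} y_i (with y_0 ∈ X,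 x_0 = y_0) satisfy x_{k+1} = x_k − Σ_{i=0}^{k} h_{k+1,i} ∇f(x_i) for k = 0, …, N−1; and (2) the mirror-dual iterates q_{k+1} = q_k − Σ_{i=0}^{k} a_{N−i,N−1−k} r_i, r_{k+1} = r_k − Σ_{i=0}^{k+1} b_{N−i,N−1−k} ∇f(q_i) (with q_0 ∈ X, r_0 = −b_{N,N} ∇f(q_0)) satisfy q_{k+1} = q_k − Σ_{i=0}^{k} h_{N−i,N−1−k} ∇f(q_i) for k = 0, …, N−1. In particular, the CFOM and its mirror dual reduce to fixed-step first-order methods whose step-size matrices are anti-diagonal transposes of each other. -/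
open Finset

/-- Auxiliary summation-interchange identity. -/
lemma aux_sum_swap (f g : ℕ → ℝ) (l n : ℕ) :
    ∑ i ∈ range n, f i * ∑ m ∈ Finset.Ico l (i + 1), g m
      = ∑ m ∈ Finset.Ico l n, g m * ∑ i ∈ Finset.Ico m n, f i := by
  induction n with
  | zero => simp
  | succ n ih =>
    rw [Finset.sum_range_succ, ih]
    rcases le_or_gt l n with hl | hl
    · have h1 : ∀ m ∈ Finset.Ico l (n + 1), g m * ∑ i ∈ Finset.Ico m (n + 1), f i
          = g m * ∑ i ∈ Finset.Ico m n, f i + g m * f n := by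
        intro m hm
        have hm' : m ≤ n := Nat.lt_succ_iff.1 (Finset.mem_Ico.1 hm).2
        rw [Finset.sum_Ico_succ_top hm']; ring
      have eA : ∑ m ∈ Finset.Ico l (n + 1), g m * ∑ i ∈ Finset.Ico m n, f i
          = ∑ m ∈ Finset.Ico l n, g m * ∑ i ∈ Finset.Ico m n, f i := by
        rw [Finset.sum_Ico_succ_top hl, Finset.Ico_self, Finset.sum_empty, mul_zero, add_zero]
      have eB : ∑ m ∈ Finset.Ico l (n + 1), g m * f n
          = f n * ∑ m ∈ Finset.Ico l (n + 1), g m := by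
        rw [Finset.mul_sum]
        exact Finset.sum_congr rfl (fun m _ => mul_comm _ _)
      calc (∑ m ∈ Finset.Ico l n, g m * ∑ i ∈ Finset.Ico m n, f i)
            + f n * ∑ m ∈ Finset.Ico l (n + 1), g m
          = (∑ m ∈ Finset.Ico l (n + 1), g m * ∑ i ∈ Finset.Ico m n, f i)
            + ∑ m ∈ Finset.Ico l (n + 1), g m * f n := by rw [eA, eB]
        _ = ∑ m ∈ Finset.Ico l (n + 1), g m * ∑ i ∈ Finset.Ico m (n + 1), f i := by
            rw [← Finset.sum_add_distrib]
            exact (Finset.sum_congr rfl h1).symm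
    · have h2 : Finset.Ico l (n + 1) = ∅ := Finset.Ico_eq_empty (by omega)
      have h3 : Finset.Ico l n = ∅ := Finset.Ico_eq_empty (by omega)
      simp [h2, h3]

/-- In a real Hilbert space `X`, with `φ = ψ = ½‖·‖²`
(so `∇φ*(y) = y` and `∇ψ*(r) = r`), a CFOM with coefficients `a, b`
satisfying `b 0 0 = -1` and zero row sums reduces to the fixed-step
first-order method with step coefficients
`h_{k+1,l} = -∑_{i=0}^{k+1} b_{k+1,i} (∑_{j=l}^{i-1} a_{j+1,l})`,
and its mirror dual reduces to the FSFOM whose step-size matrix is the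
anti-diagonal transpose `h_{N-i, N-1-k}`. -/
theorem cfom_mirror_dual_reduce_to_H_dual_fsfoms
    (X : Type*) [NormedAddCommGroup X] [InnerProductSpace ℝ X] [CompleteSpace X]
    (f : X → ℝ) (hconv : ConvexOn ℝ Set.univ f)
    (gradf : X → X) (hf : ∀ x : X, HasGradientAt f (gradf x) x)
    (N : ℕ) (hN : 1 ≤ N)
    (a b : ℕ → ℕ → ℝ) (hb00 : b 0 0 = -1)
    (hbrow : ∀ k < N, ∑ i ∈ range (k + 2), b (k + 1) i = 0)
    (h : ℕ → ℕ → ℝ)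
    (hdef : ∀ k < N, ∀ l ≤ k, h (k + 1) l =
      -∑ i ∈ range (k + 2), b (k + 1) i * (∑ j ∈ Finset.Ico l i, a (j + 1) l))
    -- the CFOM iterates
    (y x : ℕ → X) (hx0 : x 0 = y 0)
    (hy : ∀ k < N, y (k + 1) =
      y k - ∑ i ∈ range (k + 1), a (k + 1) i • gradf (x i))
    (hx : ∀ k < N, x (k + 1) =
      x k - ∑ i ∈ range (k + 2), b (k + 1) i • y i)
    -- the mirror-dual iterates
    (q r : ℕ → X) (hr0 : r 0 = -(b N N) • gradf (q 0))
    (hq : ∀ k < N, q (k + 1) =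
      q k - ∑ i ∈ range (k + 1), a (N - i) (N - 1 - k) • r i)
    (hr : ∀ k < N, r (k + 1) =
      r k - ∑ i ∈ range (k + 2), b (N - i) (N - 1 - k) • gradf (q i)) :
    -- (1) the CFOM is the FSFOM with step matrix h
    (∀ k < N, x (k + 1) =
      x k - ∑ i ∈ range (k + 1), h (k + 1) i • gradf (x i)) ∧
    -- (2) the mirror dual is the FSFOM with the anti-diagonally transposed
    --     step matrix
    (∀ k < N, q (k + 1) =
      q k - ∑ i ∈ range (k + 1), h (N - i) (N - 1 - k) • gradf (q i)) := by
  -- Claim A: closed form for y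
  have claimA : ∀ i, i ≤ N → y i = y 0 -
      ∑ l ∈ range i, (∑ j ∈ Finset.Ico l i, a (j + 1) l) • gradf (x l) := by
    intro i
    induction i with
    | zero => simp
    | succ n ih =>
      intro hn
      rw [hy n (by omega), ih (by omega)]
      have key : ∑ l ∈ range (n + 1), (∑ j ∈ Finset.Ico l (n + 1), a (j + 1) l) • gradf (x l)
          = (∑ l ∈ range n, (∑ j ∈ Finset.Ico l n, a (j + 1) l) • gradf (x l))
            + ∑ l ∈ range (n + 1), a (n + 1) l • gradf (x l) := by
        have e1 : ∑ l ∈ range n, (∑ j ∈ Finset.Ico l n, a (j + 1) l) • gradf (x l)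
            = ∑ l ∈ range (n + 1), (∑ j ∈ Finset.Ico l n, a (j + 1) l) • gradf (x l) := by
          rw [Finset.sum_range_succ, Finset.Ico_self, Finset.sum_empty, zero_smul, add_zero]
        rw [e1, ← Finset.sum_add_distrib]
        refine Finset.sum_congr rfl fun l hl => ?_
        rw [← add_smul, Finset.sum_Ico_succ_top (Nat.lt_succ_iff.1 (Finset.mem_range.1 hl))]
      rw [key]
      abel
  -- Claim B: closed form for r
  have claimB : ∀ i, i ≤ N → r i = -∑ l ∈ range (i + 1),
      (∑ m ∈ Finset.Ico l (i + 1), b (N - l) (N - m)) • gradf (q l) := by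
    intro i
    induction i with
    | zero => intro _; simp [hr0]
    | succ n ih =>
      intro hn
      have hsub : N - 1 - n = N - (n + 1) := by omega
      have hrn := hr n (by omega)
      rw [hsub] at hrn
      rw [hrn, ih (by omega)]
      have key : ∑ l ∈ range (n + 2), (∑ m ∈ Finset.Ico l (n + 2), b (N - l) (N - m)) • gradf (q l)
          = (∑ l ∈ range (n + 1), (∑ m ∈ Finset.Ico l (n + 1), b (N - l) (N - m)) • gradf (q l))
            + ∑ l ∈ range (n + 2), b (N - l) (N - (n + 1)) • gradf (q l) := by
        have e1 : ∑ l ∈ range (n + 1), (∑ m ∈ Finset.Ico l (n + 1), b (N - l) (N - m)) • gradf (q l)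
            = ∑ l ∈ range (n + 2), (∑ m ∈ Finset.Ico l (n + 1), b (N - l) (N - m)) • gradf (q l) := by
          rw [Finset.sum_range_succ (n := n + 1), Finset.Ico_self, Finset.sum_empty, zero_smul,
            add_zero]
        rw [e1, ← Finset.sum_add_distrib]
        refine Finset.sum_congr rfl fun l hl => ?_
        rw [← add_smul, Finset.sum_Ico_succ_top (Nat.lt_succ_iff.1 (Finset.mem_range.1 hl))]
      rw [key]
      abel
  constructor
  · -- part (1)
    intro k hk
    rw [hx k hk]
    congr 1
    calc ∑ i ∈ range (k + 2), b (k + 1) i • y i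
        = ∑ i ∈ range (k + 2), (b (k + 1) i • y 0 -
            ∑ l ∈ range (k + 1), (b (k + 1) i * ∑ j ∈ Finset.Ico l i, a (j + 1) l) •
              gradf (x l)) := by
          refine Finset.sum_congr rfl fun i hi => ?_
          have hiN : i ≤ N := by have := Finset.mem_range.1 hi; omega
          rw [claimA i hiN, smul_sub]
          congr 1
          rw [Finset.smul_sum]
          have hsub : range i ⊆ range (k + 1) := by
            apply Finset.range_subset_range.2; have := Finset.mem_range.1 hi; omega
          rw [← Finset.sum_subset hsub (fun l _ hl => by
            have : Finset.Ico l i = ∅ := Finset.Ico_eq_empty (by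
              simp only [Finset.mem_range] at hl ⊢; omega)
            simp [this])]
          refine Finset.sum_congr rfl fun l _ => ?_
          rw [smul_smul]
      _ = (∑ i ∈ range (k + 2), b (k + 1) i) • y 0 -
            ∑ l ∈ range (k + 1), (∑ i ∈ range (k + 2),
              b (k + 1) i * ∑ j ∈ Finset.Ico l i, a (j + 1) l) • gradf (x l) := by
          rw [Finset.sum_sub_distrib, ← Finset.sum_smul, Finset.sum_comm]
          congr 1
          refine Finset.sum_congr rfl fun l _ => ?_
          rw [Finset.sum_smul]
      _ = ∑ l ∈ range (k + 1), h (k + 1) l • gradf (x l) := by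
          rw [hbrow k hk, zero_smul, zero_sub, ← Finset.sum_neg_distrib]
          refine Finset.sum_congr rfl fun l hl => ?_
          rw [← neg_smul, ← hdef k hk l (Nat.lt_succ_iff.1 (Finset.mem_range.1 hl))]
  · -- part (2)
    intro k hk
    rw [hq k hk]
    congr 1
    have hkey : ∀ l ∈ range (k + 1), h (N - l) (N - 1 - k) =
        -∑ i ∈ range (k + 1), a (N - i) (N - 1 - k) *
          ∑ m ∈ Finset.Ico l (i + 1), b (N - l) (N - m) := by
      intro l hl
      have hlk : l ≤ k := Nat.lt_succ_iff.1 (Finset.mem_range.1 hl)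
      have hd := hdef (N - l - 1) (by omega) (N - 1 - k) (by omega)
      have e1 : N - l - 1 + 1 = N - l := by omega
      have e2 : N - l - 1 + 2 = N - l + 1 := by omega
      rw [e1, e2] at hd
      rw [hd, aux_sum_swap]
      congr 1
      -- reindex the outer sum
      have eouter : ∑ i ∈ range (N - l + 1), b (N - l) i *
            ∑ j ∈ Finset.Ico (N - 1 - k) i, a (j + 1) (N - 1 - k)
          = ∑ i ∈ Finset.Ico (N - k) (N - l + 1), b (N - l) i *
            ∑ j ∈ Finset.Ico (N - 1 - k) i, a (j + 1) (N - 1 - k) := by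
        refine (Finset.sum_subset (fun i hi => ?_) (fun i hmem hi => ?_)).symm
        · rw [Finset.mem_Ico] at hi; exact Finset.mem_range.2 hi.2
        · have : Finset.Ico (N - 1 - k) i = ∅ := Finset.Ico_eq_empty (by
            simp only [Finset.mem_Ico, Finset.mem_range, not_and, not_lt] at hi hmem ⊢
            omega)
          simp [this]
      rw [eouter]
      refine (Finset.sum_nbij' (fun m => N - m) (fun i => N - i)
        (fun m hm => ?_) (fun i hi => ?_) (fun m hm => ?_) (fun i hi => ?_) (fun m hm => ?_)).symm
      · simp only [Finset.mem_Ico] at hm ⊢; omega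
      · simp only [Finset.mem_Ico] at hi ⊢; omega
      · simp only [Finset.mem_Ico] at hm; show N - (N - m) = m; omega
      · simp only [Finset.mem_Ico] at hi; show N - (N - i) = i; omega
      · simp only [Finset.mem_Ico] at hm
        show b (N - l) (N - m) * ∑ i ∈ Finset.Ico m (k + 1), a (N - i) (N - 1 - k)
          = b (N - l) (N - m) * ∑ j ∈ Finset.Ico (N - 1 - k) (N - m), a (j + 1) (N - 1 - k)
        congr 1
        refine Finset.sum_nbij' (fun i => N - 1 - i) (fun j => N - 1 - j)
          (fun i hi => ?_) (fun j hj => ?_) (fun i hi => ?_) (fun j hj => ?_) (fun i hi => ?_)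
        · simp only [Finset.mem_Ico] at hi ⊢; omega
        · simp only [Finset.mem_Ico] at hj ⊢; omega
        · simp only [Finset.mem_Ico] at hi; show N - 1 - (N - 1 - i) = i; omega
        · simp only [Finset.mem_Ico] at hj; show N - 1 - (N - 1 - j) = j; omega
        · simp only [Finset.mem_Ico] at hi
          show a (N - i) (N - 1 - k) = a (N - 1 - i + 1) (N - 1 - k)
          have : N - 1 - i + 1 = N - i := by omega
          rw [this]
    calc ∑ i ∈ range (k + 1), a (N - i) (N - 1 - k) • r i
        = ∑ i ∈ range (k + 1), -∑ l ∈ range (k + 1),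
            (a (N - i) (N - 1 - k) * ∑ m ∈ Finset.Ico l (i + 1), b (N - l) (N - m)) •
              gradf (q l) := by
          refine Finset.sum_congr rfl fun i hi => ?_
          have hiN : i ≤ N := by have := Finset.mem_range.1 hi; omega
          rw [claimB i hiN, smul_neg, neg_inj, Finset.smul_sum]
          have hsub : range (i + 1) ⊆ range (k + 1) := by
            apply Finset.range_subset_range.2; have := Finset.mem_range.1 hi; omega
          rw [← Finset.sum_subset hsub (fun l _ hl => by
            have : Finset.Ico l (i + 1) = ∅ := Finset.Ico_eq_empty (by
              simp only [Finset.mem_range] at hl ⊢; omega)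
            simp [this])]
          refine Finset.sum_congr rfl fun l _ => ?_
          rw [smul_smul]
      _ = -∑ l ∈ range (k + 1), (∑ i ∈ range (k + 1),
            a (N - i) (N - 1 - k) * ∑ m ∈ Finset.Ico l (i + 1), b (N - l) (N - m)) •
              gradf (q l) := by
          rw [Finset.sum_neg_distrib, neg_inj, Finset.sum_comm]
          refine Finset.sum_congr rfl fun l _ => ?_
          rw [Finset.sum_smul]
      _ = ∑ l ∈ range (k + 1), h (N - l) (N - 1 - k) • gradf (q l) := by
          rw [← Finset.sum_neg_distrib]
          refine Finset.sum_congr rfl fun l hl => ?_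
          rw [← neg_smul, ← hkey l hl]
end
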